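/- If an infinite word x has its string attractor profile function bounded by a constant, then x is either ultimately periodic or ω-power free (i.e., for every factor w of x there exists k such that w^k is not a factor of x). -/
import Mathlib


open scoped Classical

/-- `u` occurs in `w` starting at (0-based) position `i`. -/
def occursAt {α : Type*} (w u : List α) (i : ℕ) : Prop := (w.drop i).take u.length = u

/-- `u` is a factor of the finite word `w`. -/
def IsFactorOf {α : Type*} (w u : List α) : Prop := ∃ i, occursAt w u i

/-- `Γ` is a string attractor of the finite word `w` (positions are 0-based). -/
def IsAttractor {α : Type*} (w : List α) (Γ : Finset ℕ) : Prop :=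
  (∀ k ∈ Γ, k < w.length) ∧
  ∀ u : List α, u ≠ [] → IsFactorOf w u →
    ∃ i, occursAt w u i ∧ ∃ k ∈ Γ, i ≤ k ∧ k < i + u.length

/-- `γ*(w)`: minimum size of a string attractor of `w`. -/
noncomputable def gammaStar {α : Type*} (w : List α) : ℕ :=
  sInf {n | ∃ Γ : Finset ℕ, IsAttractor w Γ ∧ Γ.card = n}

/-- `span(w)`: minimum of (rightmost − leftmost position) over string attractors of `w`. -/
noncomputable def spanW {α : Type*} (w : List α) : ℕ :=
  sInf {d | ∃ Γ : Finset ℕ, IsAttractor w Γ ∧ sSup (Γ : Set ℕ) - sInf (Γ : Set ℕ) = d}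

/-- `lm(w)`: minimum rightmost position over string attractors of `w`. -/
noncomputable def lmW {α : Type*} (w : List α) : ℕ :=
  sInf {m | ∃ Γ : Finset ℕ, IsAttractor w Γ ∧ sSup (Γ : Set ℕ) = m}

/-- prefix of length `n` of the infinite word `x`. -/
def pref {α : Type*} (x : ℕ → α) (n : ℕ) : List α := (List.range n).map x

/-- the factor of length `m` of `x` starting at position `i`. -/
def factorAt {α : Type*} (x : ℕ → α) (i m : ℕ) : List α := (List.range m).map (fun t => x (i + t))

/-- `u` is a factor of the infinite word `x`. -/
def IsFactorInf {α : Type*} (x : ℕ → α) (u : List α) : Prop := ∃ i, u = factorAt x i u.length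

/-- factor complexity `p_x(n)`. -/
noncomputable def complexity {α : Type*} (x : ℕ → α) (n : ℕ) : ℕ :=
  {u : List α | u.length = n ∧ IsFactorInf x u}.ncard

/-- appearance function `A_x(n)`: least `m` such that the prefix of length `m`
contains all factors of `x` of length `n`. -/
noncomputable def appearance {α : Type*} (x : ℕ → α) (n : ℕ) : ℕ :=
  sInf {m | ∀ u : List α, u.length = n → IsFactorInf x u → IsFactorOf (pref x m) u}

/-- `x` is ultimately periodic. -/
def UltPeriodic {α : Type*} (x : ℕ → α) : Prop :=
  ∃ p N : ℕ, 0 < p ∧ ∀ i, N ≤ i → x (i + p) = x i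

/-- `x` is recurrent: every factor occurs infinitely often. -/
def Recurrent {α : Type*} (x : ℕ → α) : Prop :=
  ∀ u : List α, IsFactorInf x u → ∀ N : ℕ, ∃ i, N ≤ i ∧ u = factorAt x i u.length

/-- `u ^ k`: the `k`-th power of a finite word. -/
def listPow {α : Type*} (u : List α) : ℕ → List α
  | 0 => []
  | k + 1 => u ++ listPow u k

/-- `x` is ω-power free. -/
def OmegaPowerFree {α : Type*} (x : ℕ → α) : Prop :=
  ∀ u : List α, u ≠ [] → IsFactorInf x u → ∃ k : ℕ, ¬ IsFactorInf x (listPow u k)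

lemma factorAt_getElem {α} (x : ℕ → α) (i m j : ℕ) (h : j < (factorAt x i m).length) :
    (factorAt x i m)[j] = x (i + j) := by
  simp [factorAt]

lemma occursAt_pref {α} (x : ℕ → α) {n q m : ℕ} (h : q + m ≤ n) :
    occursAt (pref x n) (factorAt x q m) q := by
  unfold occursAt pref factorAt
  apply List.ext_getElem
  · simp; omega
  · intro j h1 h2
    simp [List.getElem_take, List.getElem_drop]

lemma occursAt_pref_length {α} {x : ℕ → α} {n q : ℕ} {v : List α} (hv : v ≠ [])
    (h : occursAt (pref x n) v q) : q + v.length ≤ n := by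
  have h1 := congrArg List.length h
  simp [pref] at h1
  have h2 : 0 < v.length := List.length_pos_iff.mpr hv
  omega

lemma occursAt_pref_getElem {α} {x : ℕ → α} {n q : ℕ} {v : List α}
    (h : occursAt (pref x n) v q) (j : ℕ) (hj : j < v.length) (hle : q + v.length ≤ n) :
    v[j] = x (q + j) := by
  rw [List.getElem_of_eq h.symm hj]
  simp [List.getElem_take, List.getElem_drop, pref]


lemma listPow_length {α} (u : List α) : ∀ k, (listPow u k).length = k * u.length
  | 0 => by simp [listPow]
  | k+1 => by simp [listPow, listPow_length u k]; ring

lemma listPow_getElem {α} (u : List α) (hu : u ≠ []) :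
    ∀ (k t : ℕ) (h : t < (listPow u k).length),
      (listPow u k)[t] = u[t % u.length]'(Nat.mod_lt _ (List.length_pos_iff.mpr hu))
  | 0, t, h => by simp [listPow] at h
  | k+1, t, h => by
    have e : listPow u (k+1) = u ++ listPow u k := rfl
    rw [List.getElem_of_eq e h]
    rcases Nat.lt_or_ge t u.length with hlt | hge
    · rw [List.getElem_append_left hlt]
      congr 1
      exact (Nat.mod_eq_of_lt hlt).symm
    · rw [List.getElem_append_right hge]
      rw [listPow_getElem u hu k (t - u.length)]
      congr 1
      conv_rhs => rw [show t = t - u.length + u.length by omega]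
      rw [Nat.add_mod_right]

def MaxRunP (Q : ℕ → Prop) (s ℓ : ℕ) : Prop :=
  (∀ t, s ≤ t → t < s + ℓ → Q t) ∧ ¬ Q (s + ℓ) ∧ (1 ≤ s → ¬ Q (s - 1))

lemma maxRunP_len_eq {Q : ℕ → Prop} {s ℓ s' ℓ' : ℕ} (h : MaxRunP Q s ℓ)
    (h' : MaxRunP Q s' ℓ') (hi : s' < s + ℓ) (hi' : s < s' + ℓ') : ℓ = ℓ' := by
  obtain ⟨hm, hr, hl⟩ := h
  obtain ⟨hm', hr', hl'⟩ := h'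
  have hss : s = s' := by
    rcases lt_trichotomy s s' with hlt | he | hgt
    · exact absurd (hm (s' - 1) (by omega) (by omega)) (hl' (by omega))
    · exact he
    · exact absurd (hm' (s - 1) (by omega) (by omega)) (hl (by omega))
  subst hss
  rcases lt_trichotomy ℓ ℓ' with hlt | he | hgt
  · exact absurd (hm' (s + ℓ) (by omega) (by omega)) hr
  · exact he
  · exact absurd (hm (s + ℓ') (by omega) (by omega)) hr'

lemma exists_maxRunP (Q : ℕ → Prop) (hbr : ∀ N, ∃ t, N ≤ t ∧ ¬ Q t)
    (hlong : ∀ L, ∃ a, ∀ j, j < L → Q (a + j)) (L : ℕ) :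
    ∃ s ℓ, L ≤ ℓ ∧ MaxRunP Q s ℓ := by
  obtain ⟨a, ha⟩ := hlong L
  obtain ⟨t0, ht0, hq0⟩ := hbr a
  have h1 : ∃ n, ¬ Q (a + n) := ⟨t0 - a, by rwa [Nat.add_sub_cancel' ht0]⟩
  have hend : ¬ Q (a + Nat.find h1) := Nat.find_spec h1
  have hmin : ∀ j, j < Nat.find h1 → Q (a + j) := fun j hj => not_not.mp (Nat.find_min h1 hj)
  set n0 := Nat.find h1 with hn0
  have hLn0 : L ≤ n0 := by
    by_contra hc
    exact hend (ha n0 (by omega))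
  have hpa : ∀ t, a ≤ t → t < a + n0 → Q t := by
    intro t h1t h2t
    have := hmin (t - a) (by omega)
    rwa [Nat.add_sub_cancel' h1t] at this
  have h2 : ∃ s, ∀ t, s ≤ t → t < a + n0 → Q t := ⟨a, hpa⟩
  have hs0a : Nat.find h2 ≤ a := Nat.find_min' h2 hpa
  have hspec : ∀ t, Nat.find h2 ≤ t → t < a + n0 → Q t := Nat.find_spec h2
  set s0 := Nat.find h2 with hs0
  refine ⟨s0, a + n0 - s0, by omega, fun t ht1 ht2 => hspec t ht1 (by omega), ?_, ?_⟩
  · rw [show s0 + (a + n0 - s0) = a + n0 by omega]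
    exact hend
  · intro hs1
    have hne := Nat.find_min h2 (show s0 - 1 < s0 by omega)
    push_neg at hne
    obtain ⟨t, ht1, ht2, ht3⟩ := hne
    rcases Nat.lt_or_ge t s0 with hlt | hge
    · rwa [show s0 - 1 = t by omega]
    · exact absurd (hspec t hge ht2) ht3


lemma isAttractor_range {α} (w : List α) : IsAttractor w (Finset.range w.length) := by
  constructor
  · intro k hk; simpa using hk
  · rintro u hu ⟨i, hi⟩
    have hlen : i + u.length ≤ w.length := by
      have h1 := congrArg List.length hi
      simp at h1
      have h2 : 0 < u.length := List.length_pos_iff.mpr hu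
      omega
    have h2 : 0 < u.length := List.length_pos_iff.mpr hu
    exact ⟨i, hi, i, Finset.mem_range.mpr (by omega), le_refl i, by omega⟩

lemma exists_attractor_card_le {α} (w : List α) {C : ℕ} (h : gammaStar w ≤ C) :
    ∃ Γ : Finset ℕ, IsAttractor w Γ ∧ Γ.card ≤ C := by
  have hne : {n | ∃ Γ : Finset ℕ, IsAttractor w Γ ∧ Γ.card = n}.Nonempty :=
    ⟨_, Finset.range w.length, isAttractor_range w, rfl⟩
  obtain ⟨Γ, hΓ, hcard⟩ := Nat.sInf_mem hne
  exact ⟨Γ, hΓ, le_trans (le_of_eq hcard) h⟩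

/-- bounded string attractor profile implies ultimately periodic or ω-power free. -/
theorem stmt5 {α : Type*} (x : ℕ → α) (C : ℕ)
    (h : ∀ n : ℕ, gammaStar (pref x n) ≤ C) :
    UltPeriodic x ∨ OmegaPowerFree x := by
  by_cases hup : UltPeriodic x
  · exact Or.inl hup
  refine Or.inr ?_
  intro u hu _hufac
  by_contra hpow
  push_neg at hpow
  set p := u.length with hpdef
  have hp0 : 0 < p := List.length_pos_iff.mpr hu
  set Q : ℕ → Prop := fun t => x (t + p) = x t with hQdef
  -- breaks occur unboundedly
  have hbr : ∀ N, ∃ t, N ≤ t ∧ ¬ Q t := by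
    intro N
    have h1 : ¬ (0 < p ∧ ∀ i, N ≤ i → x (i + p) = x i) := fun hc => hup ⟨p, N, hc⟩
    push_neg at h1
    obtain ⟨t, ht1, ht2⟩ := h1 hp0
    exact ⟨t, ht1, ht2⟩
  -- long runs exist
  have hlong : ∀ L, ∃ a, ∀ j, j < L → Q (a + j) := by
    intro L
    obtain ⟨i, hi⟩ := hpow (L + 1)
    have hlen : (listPow u (L+1)).length = (L+1) * p := listPow_length u (L+1)
    have hval : ∀ t (ht : t < (L+1) * p), x (i + t) = u[t % p]'(Nat.mod_lt _ hp0) := by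
      intro t ht
      have hlt : t < (listPow u (L+1)).length := by rw [hlen]; exact ht
      have h1 : (listPow u (L+1))[t]'hlt = x (i + t) := by
        rw [List.getElem_of_eq hi hlt]
        rw [listPow_length] at hlt
        exact factorAt_getElem x i _ t (by simpa [factorAt])
      rw [← h1, listPow_getElem u hu]
    have hLp : L ≤ L * p := Nat.le_mul_of_pos_right L hp0
    refine ⟨i, fun j hj => ?_⟩
    show x (i + j + p) = x (i + j)
    have e1 : x (i + (j + p)) = u[(j + p) % p]'(Nat.mod_lt _ hp0) :=
      hval (j + p) (by rw [Nat.succ_mul]; omega)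
    have e2 : x (i + j) = u[j % p]'(Nat.mod_lt _ hp0) := hval j (by rw [Nat.succ_mul]; omega)
    have e3 : u[(j + p) % p]'(Nat.mod_lt _ hp0) = u[j % p]'(Nat.mod_lt _ hp0) := by
      congr 1
      exact Nat.add_mod_right j p
    rw [show i + j + p = i + (j + p) by omega, e1, e3, ← e2]
  -- choose runs of strictly increasing lengths
  have runex : ∀ L, ∃ sl : ℕ × ℕ, L ≤ sl.2 ∧ MaxRunP Q sl.1 sl.2 := by
    intro L
    obtain ⟨s, ℓ, h1, h2⟩ := exists_maxRunP Q hbr hlong L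
    exact ⟨(s, ℓ), h1, h2⟩
  let f : ℕ → ℕ × ℕ := fun i =>
    Nat.rec ((runex (p + 2)).choose) (fun _ prev => (runex (prev.2 + 1)).choose) i
  have hf0 : p + 2 ≤ (f 0).2 ∧ MaxRunP Q (f 0).1 (f 0).2 := (runex (p + 2)).choose_spec
  have hfs : ∀ i, (f i).2 + 1 ≤ (f (i + 1)).2 ∧ MaxRunP Q (f (i + 1)).1 (f (i + 1)).2 :=
    fun i => (runex ((f i).2 + 1)).choose_spec
  have hmono : StrictMono (fun i => (f i).2) :=
    strictMono_nat_of_lt_succ (fun i => by have := (hfs i).1; omega)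
  have hge : ∀ i, p + 2 ≤ (f i).2 := fun i => le_trans hf0.1 (hmono.monotone (Nat.zero_le i))
  have hrun : ∀ i, MaxRunP Q (f i).1 (f i).2 := by
    intro i
    cases i with
    | zero => exact hf0.2
    | succ n => exact (hfs n).2
  -- the big prefix and its attractor
  set m := 2 * C + 2 with hmdef
  set n := ((Finset.range m).sup fun i => (f i).1 + (f i).2 + p) + 1 with hndef
  obtain ⟨Γ, hΓ, hΓc⟩ := exists_attractor_card_le (pref x n) (h n)
  -- indices whose run does not start at 0
  set I : Finset ℕ := (Finset.range m).filter (fun i => 1 ≤ (f i).1) with hIdef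
  have hIcard : 2 * C + 1 ≤ I.card := by
    have hzero : ((Finset.range m) \ I).card ≤ 1 := by
      apply Finset.card_le_one.mpr
      intro a ha b hb
      simp only [hIdef, Finset.mem_sdiff, Finset.mem_filter, Finset.mem_range, not_and,
        not_le] at ha hb
      have ha0 : (f a).1 = 0 := by have := ha.2 ha.1; omega
      have hb0 : (f b).1 = 0 := by have := hb.2 hb.1; omega
      by_contra hne
      have hga := hge a
      have hgb := hge b
      have hlen : (f a).2 = (f b).2 :=
        maxRunP_len_eq (hrun a) (hrun b) (by omega) (by omega)
      exact hne (hmono.injective hlen)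
    have hsub : I ⊆ Finset.range m := Finset.filter_subset _ _
    have hsplit := Finset.card_sdiff_add_card_eq_card hsub
    rw [Finset.card_range] at hsplit
    omega
  -- main crossing fact
  have main : ∀ i ∈ I, ∃ γ, γ ∈ Γ ∧ ∃ a,
      MaxRunP Q a (f i).2 ∧ a ≤ γ + 1 ∧ γ ≤ a + (f i).2 + p := by
    intro i hi
    simp only [hIdef, Finset.mem_filter, Finset.mem_range] at hi
    obtain ⟨him, hs1⟩ := hi
    obtain ⟨hmid, hright, hleft⟩ := hrun i
    set s := (f i).1 with hsdef
    set ℓ := (f i).2 with hldef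
    have hQs : ¬ Q (s - 1) := hleft hs1
    set v := factorAt x (s - 1) (ℓ + p + 2) with hvdef
    have hvlen : v.length = ℓ + p + 2 := by simp [hvdef, factorAt]
    have hbound : s - 1 + (ℓ + p + 2) ≤ n := by
      have hsup : (f i).1 + (f i).2 + p ≤ (Finset.range m).sup fun i => (f i).1 + (f i).2 + p :=
        Finset.le_sup (f := fun i => (f i).1 + (f i).2 + p) (Finset.mem_range.mpr him)
      omega
    have hvne : v ≠ [] := by
      intro hc
      rw [hc] at hvlen
      simp at hvlen
    have hocc : occursAt (pref x n) v (s - 1) := by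
      rw [hvdef]
      exact occursAt_pref x hbound
    obtain ⟨q, hq, γ, hγΓ, hγ1, hγ2⟩ := hΓ.2 v hvne ⟨s - 1, hocc⟩
    have hqn : q + v.length ≤ n := occursAt_pref_length hvne hq
    have htr : ∀ j, j < ℓ + p + 2 → x (q + j) = x (s - 1 + j) := by
      intro j hj
      have h1 := occursAt_pref_getElem hq j (by omega) hqn
      have h2 : v[j]'(by omega) = x (s - 1 + j) := by
        rw [List.getElem_of_eq hvdef (by omega : j < v.length)]
        exact factorAt_getElem x (s - 1) (ℓ + p + 2) j (by simp [factorAt]; omega)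
      rw [← h1, h2]
    rw [hvlen] at hγ2
    refine ⟨γ, hγΓ, q + 1, ⟨?_, ?_, ?_⟩, by omega, by omega⟩
    · intro t ht1 ht2
      have hj1 : 1 ≤ t - q := by omega
      have hj2 : t - q ≤ ℓ := by omega
      set j := t - q with hjdef
      show x (t + p) = x t
      calc x (t + p) = x (q + (j + p)) := by congr 1; omega
        _ = x (s - 1 + (j + p)) := htr (j + p) (by omega)
        _ = x (s - 1 + j + p) := by congr 1; omega
        _ = x (s - 1 + j) := hmid (s - 1 + j) (by omega) (by omega)
        _ = x (q + j) := (htr j (by omega)).symm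
        _ = x t := by congr 1; omega
    · intro hc
      apply hright
      show x (s + ℓ + p) = x (s + ℓ)
      have hc' : x (q + 1 + ℓ + p) = x (q + 1 + ℓ) := hc
      calc x (s + ℓ + p) = x (s - 1 + (ℓ + 1 + p)) := by congr 1; omega
        _ = x (q + (ℓ + 1 + p)) := (htr (ℓ + 1 + p) (by omega)).symm
        _ = x (q + 1 + ℓ + p) := by congr 1; omega
        _ = x (q + 1 + ℓ) := hc'
        _ = x (q + (ℓ + 1)) := by congr 1; omega
        _ = x (s - 1 + (ℓ + 1)) := htr (ℓ + 1) (by omega)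
        _ = x (s + ℓ) := by congr 1; omega
    · intro _ hc
      apply hQs
      show x (s - 1 + p) = x (s - 1)
      have hc' : x (q + p) = x q := by
        have : x (q + 1 - 1 + p) = x (q + 1 - 1) := hc
        simpa using this
      calc x (s - 1 + p) = x (q + p) := (htr p (by omega)).symm
        _ = x q := hc'
        _ = x (q + 0) := by congr 1
        _ = x (s - 1 + 0) := htr 0 (by omega)
        _ = x (s - 1) := by congr 1
  choose! γfun hγmem afun harun hale hage using main
  have hfiber : ∀ b ∈ Γ, (I.filter fun i => γfun i = b).card ≤ 2 := by
    intro b _hb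
    by_contra hc
    push_neg at hc
    obtain ⟨i1, i2, i3, h1, h2, h3, h12, h13, h23⟩ := Finset.two_lt_card_iff.mp hc
    simp only [Finset.mem_filter] at h1 h2 h3
    obtain ⟨hi1, hb1⟩ := h1
    obtain ⟨hi2, hb2⟩ := h2
    obtain ⟨hi3, hb3⟩ := h3
    have hdisj : ∀ {i j : ℕ}, i ∈ I → j ∈ I → (f i).2 ≠ (f j).2 →
        afun i + (f i).2 ≤ afun j ∨ afun j + (f j).2 ≤ afun i := by
      intro i j hi hj hne
      by_contra hcc
      push_neg at hcc
      exact hne (maxRunP_len_eq (harun i hi) (harun j hj) (by omega) (by omega))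
    have hne12 : (f i1).2 ≠ (f i2).2 := fun he => h12 (hmono.injective he)
    have hne13 : (f i1).2 ≠ (f i3).2 := fun he => h13 (hmono.injective he)
    have hne23 : (f i2).2 ≠ (f i3).2 := fun he => h23 (hmono.injective he)
    have d12 := hdisj hi1 hi2 hne12
    have d13 := hdisj hi1 hi3 hne13
    have d23 := hdisj hi2 hi3 hne23
    have c1a := hale i1 hi1
    have c1b := hage i1 hi1
    have c2a := hale i2 hi2
    have c2b := hage i2 hi2
    have c3a := hale i3 hi3
    have c3b := hage i3 hi3
    have g1 := hge i1
    have g2 := hge i2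
    have g3 := hge i3
    rw [hb1] at c1a c1b
    rw [hb2] at c2a c2b
    rw [hb3] at c3a c3b
    omega
  have hcount := Finset.card_le_mul_card_image_of_maps_to hγmem 2 hfiber
  omega
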